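/- arXiv:2105.03146 — 2 statements merged into one kernel-verified Lean document; each statement's English description precedes it below -/
import Mathlib

section
/- For every graph G=(V,E,b,c)∈𝒢^KP, Katz prestige defined as the Cesàro limit KP_v(G)=lim_{T→∞} Σ_{t=0}^T p^1_{v,G}(t)/T satisfies the Katz prestige recursive equation KP_v(G) = Σ_{(u,v)∈E} (c(u,v)/deg⁺_u(G))·KP_u(G) for every node v∈V (sum over incoming edges of v), and moreover Σ_{v∈V} KP_v(G) = Σ_{v∈V} b(v). -/
open Filter

attribute [local instance] Classical.propDecidable

/-- A (directed, weighted) graph `G=(V,E,b,c)`: a finite set of nodes `V ⊆ ℕ`,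
a set of directed edges `E ⊆ V × V` (self-loops allowed), node weights `b` and
edge weights `c` (stored as total functions, zero outside `V` resp. `E`). -/
structure WGraph where
  V : Finset ℕ
  E : Finset (ℕ × ℕ)
  b : ℕ → ℝ
  c : ℕ × ℕ → ℝ

namespace WGraph

/-- Well-formedness of a graph: edges connect nodes, node weights are nonnegative,
edge weights are positive, and the weight functions vanish outside `V` resp. `E`. -/
def Valid (G : WGraph) : Prop :=
  (∀ e ∈ G.E, e.1 ∈ G.V ∧ e.2 ∈ G.V) ∧
  (∀ v, 0 ≤ G.b v) ∧ (∀ v, v ∉ G.V → G.b v = 0) ∧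
  (∀ e ∈ G.E, 0 < G.c e) ∧ (∀ e, e ∉ G.E → G.c e = 0)

/-- Out-degree `deg⁺_v(G)`: the total weight of outgoing edges of `v`. -/
noncomputable def degOut (G : WGraph) (v : ℕ) : ℝ :=
  ∑ e ∈ G.E.filter (fun e => e.1 = v), G.c e

/-- `ω` is a walk of length `t ≥ 1` in `G`. -/
def IsWalk (G : WGraph) (t : ℕ) (ω : ℕ → ℕ) : Prop :=
  1 ≤ t ∧ ∀ i < t, (ω i, ω (i + 1)) ∈ G.E

/-- `v` is a successor of `u` (and `u` a predecessor of `v`):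
some walk starts at `u` and ends at `v`. -/
def Succ (G : WGraph) (u v : ℕ) : Prop :=
  ∃ t ω, G.IsWalk t ω ∧ ω 0 = u ∧ ω t = v

/-- `G` is strongly connected: `S(v) = V` for every node `v`. -/
def StronglyConnected (G : WGraph) : Prop :=
  ∀ u ∈ G.V, ∀ v ∈ G.V, G.Succ u v

/-- Membership in the class `𝒢^KP` of (disjoint) sums of strongly connected graphs,
characterized by: every node lies on a cycle, and the start of every edge
is reachable back from its end. -/
def InGKP (G : WGraph) : Prop :=
  G.Valid ∧ (∀ v ∈ G.V, G.Succ v v) ∧ (∀ e ∈ G.E, G.Succ e.2 e.1)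

/-- The adjacency matrix of `G`: `A_{u,v} = c(v,u)` if `(v,u) ∈ E` and `0` otherwise. -/
noncomputable def adjMatrix (G : WGraph) : Matrix {v // v ∈ G.V} {v // v ∈ G.V} ℝ :=
  fun u v => if ((v : ℕ), (u : ℕ)) ∈ G.E then G.c ((v : ℕ), (u : ℕ)) else 0

/-- The principal eigenvalue `λ`: the largest real eigenvalue of the adjacency matrix. -/
noncomputable def principalEig (G : WGraph) : ℝ :=
  sSup {r : ℝ | ∃ x : {v // v ∈ G.V} → ℝ, x ≠ 0 ∧ G.adjMatrix.mulVec x = r • x}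

/-- The strongly connected component of `v` (as an induced subgraph),
for graphs in `𝒢^KP`. -/
noncomputable def component (G : WGraph) (v : ℕ) : WGraph where
  V := G.V.filter (fun u => G.Succ v u)
  E := G.E.filter (fun e => G.Succ v e.1 ∧ G.Succ v e.2)
  b := fun u => if u ∈ G.V ∧ G.Succ v u then G.b u else 0
  c := fun e => if e ∈ G.E ∧ G.Succ v e.1 ∧ G.Succ v e.2 then G.c e else 0

/-- Membership in the class `𝒢^EV` of sums of strongly connected graphs
all having the same principal eigenvalue. -/
def InGEV (G : WGraph) : Prop :=
  G.InGKP ∧ ∀ v ∈ G.V, (G.component v).principalEig = G.principalEig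

/-- Membership in the class `𝒢^{K(a)}` of graphs whose principal eigenvalue
satisfies `λ < 1/a` (expressed as `a * λ < 1`). -/
def InGK (a : ℝ) (G : WGraph) : Prop := G.Valid ∧ a * G.principalEig < 1

/-- `G` is `x`-out-regular for some `x > 0`. -/
def OutRegular (G : WGraph) : Prop :=
  ∃ x : ℝ, 0 < x ∧ ∀ v ∈ G.V, G.degOut v = x

/-- `G` is semi-out-regular: every node has out-degree `r` or `0`, for some fixed `r > 0`. -/
def SemiOutRegular (G : WGraph) : Prop :=
  ∃ r : ℝ, 0 < r ∧ ∀ v ∈ G.V, G.degOut v = r ∨ G.degOut v = 0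

/-- The distributed process: `p^a_{v,G}(t)` is the sum, over all walks `ω` of length `t`
ending at `v`, of `b(ω(0)) · ∏_{i<t} a·c(ω(i),ω(i+1))/deg⁺_{ω(i)}(G)`
(for `t = 0` this is `b(v)` for `v ∈ V`). -/
noncomputable def pProc (a : ℝ) (G : WGraph) (t : ℕ) (v : ℕ) : ℝ :=
  ∑ ω ∈ (Fintype.piFinset (fun _ : Fin (t + 1) => G.V)).filter
      (fun ω => ω (Fin.last t) = v ∧ ∀ i : Fin t, (ω i.castSucc, ω i.succ) ∈ G.E),
    G.b (ω 0) * ∏ i : Fin t,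
      a * G.c (ω i.castSucc, ω i.succ) / G.degOut (ω i.castSucc)

/-- The parallel process: `w^a_{v,G}(t)` is the sum, over all walks `ω` of length `t`
ending at `v`, of `b(ω(0)) · ∏_{i<t} a·c(ω(i),ω(i+1))`
(for `t = 0` this is `b(v)` for `v ∈ V`). -/
noncomputable def wProc (a : ℝ) (G : WGraph) (t : ℕ) (v : ℕ) : ℝ :=
  ∑ ω ∈ (Fintype.piFinset (fun _ : Fin (t + 1) => G.V)).filter
      (fun ω => ω (Fin.last t) = v ∧ ∀ i : Fin t, (ω i.castSucc, ω i.succ) ∈ G.E),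
    G.b (ω 0) * ∏ i : Fin t, a * G.c (ω i.castSucc, ω i.succ)

/-- PageRank with decay factor `a`: `PR^a_v(G) = Σ_{t=0}^∞ p^a_{v,G}(t)`. -/
noncomputable def PageRank (a : ℝ) (G : WGraph) (v : ℕ) : ℝ := ∑' t : ℕ, pProc a G t v

/-- Katz centrality with decay factor `a`: `K^a_v(G) = Σ_{t=0}^∞ w^a_{v,G}(t)`. -/
noncomputable def Katz (a : ℝ) (G : WGraph) (v : ℕ) : ℝ := ∑' t : ℕ, wProc a G t v

/-- Katz prestige: the Cesàro limit `KP_v(G) = lim_{T→∞} Σ_{t=0}^T p^1_{v,G}(t)/T`. -/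
noncomputable def KP (G : WGraph) (v : ℕ) : ℝ :=
  limUnder atTop (fun T : ℕ => (∑ t ∈ Finset.range (T + 1), pProc 1 G t v) / (T : ℝ))

/-- Eigenvector centrality: the Cesàro limit
`EV_v(G) = lim_{T→∞} Σ_{t=0}^T w^{1/λ}_{v,G}(t)/T`. -/
noncomputable def EV (G : WGraph) (v : ℕ) : ℝ :=
  limUnder atTop
    (fun T : ℕ => (∑ t ∈ Finset.range (T + 1), wProc (1 / G.principalEig) G t v) / (T : ℝ))

/-- The sum `G + G'` of two graphs (intended for disjoint node sets). -/
noncomputable def gsum (G G' : WGraph) : WGraph where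
  V := G.V ∪ G'.V
  E := G.E ∪ G'.E
  b := fun v => G.b v + G'.b v
  c := fun e => G.c e + G'.c e

/-- The graph `(V, E ∖ {e₀}, b, c)`. -/
noncomputable def deleteEdge (G : WGraph) (e₀ : ℕ × ℕ) : WGraph where
  V := G.V
  E := G.E.erase e₀
  b := G.b
  c := fun e => if e = e₀ then 0 else G.c e

/-- Multiply the weights of all outgoing edges of `u` by `x`. -/
noncomputable def scaleOut (G : WGraph) (u : ℕ) (x : ℝ) : WGraph where
  V := G.V
  E := G.E
  b := G.b
  c := fun e => if e.1 = u then x * G.c e else G.c e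

/-- Edge compensation operation at node `u` with constant `x`: multiply the weights of the
non-loop outgoing edges of `u` by `x`, divide `b(u)` and the weights of the non-loop
incoming edges of `u` by `x`. -/
noncomputable def compensate (G : WGraph) (u : ℕ) (x : ℝ) : WGraph where
  V := G.V
  E := G.E
  b := fun v => if v = u then G.b v / x else G.b v
  c := fun e =>
    if e = (u, u) then G.c e
    else if e.1 = u then x * G.c e
    else if e.2 = u then G.c e / x
    else G.c e

/-- Replace the node weights of `G` by `b'`. -/
def withB (G : WGraph) (b' : ℕ → ℝ) : WGraph := ⟨G.V, G.E, b', G.c⟩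

/-- The graph `(V, E, x·b, c)`. -/
def scaleB (G : WGraph) (x : ℝ) : WGraph := G.withB (fun v => x * G.b v)

end WGraph

/-- Proportional combining `C^F_{u→w}(G)`: scale the weights of the outgoing edges of `u` by
`F_u(G)/(F_u(G)+F_w(G))` and of `w` by `F_w(G)/(F_u(G)+F_w(G))`, then merge `u` into `w`
(delete `u`, redirect its incoming and outgoing edges to `w`, summing weights of parallel
edges, and add `b(u)` to `b(w)`). -/
noncomputable def combine (F : WGraph → ℕ → ℝ) (G : WGraph) (u w : ℕ) : WGraph :=
  let m : ℕ → ℕ := fun x => if x = u then w else x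
  let scale : ℕ × ℕ → ℝ := fun e =>
    (if e.1 = u then F G u / (F G u + F G w)
     else if e.1 = w then F G w / (F G u + F G w) else 1) * G.c e
  { V := G.V.erase u
    E := G.E.image (fun e => (m e.1, m e.2))
    b := fun v => if v = u then 0 else if v = w then G.b u + G.b w else G.b v
    c := fun e' =>
      if e' ∈ G.E.image (fun e => (m e.1, m e.2)) then
        ∑ e ∈ G.E.filter (fun e => (m e.1, m e.2) = e'), scale e
      else 0 }

/-- Locality (LOC), relative to the domain class `D`. -/
def LOC (D : WGraph → Prop) (F : WGraph → ℕ → ℝ) : Prop :=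
  ∀ G G' : WGraph, Disjoint G.V G'.V → D G → D G' → D (G.gsum G') →
    ∀ v ∈ G.V, F (G.gsum G') v = F G v

/-- Edge Deletion (ED), relative to the domain class `D`. -/
def ED (D : WGraph → Prop) (F : WGraph → ℕ → ℝ) : Prop :=
  ∀ G : WGraph, D G → ∀ e ∈ G.E, D (G.deleteEdge e) →
    ∀ v ∈ G.V, ¬ G.Succ e.1 v → F (G.deleteEdge e) v = F G v

/-- Node Combination (NC), relative to the domain class `D`. -/
def NC (D : WGraph → Prop) (F : WGraph → ℕ → ℝ) : Prop :=
  ∀ G : WGraph, D G → ∀ u ∈ G.V, ∀ w ∈ G.V, u ≠ w →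
    G.degOut u = G.degOut w →
    (∀ s, G.Succ u s ∨ G.Succ w s → G.degOut s = G.degOut u) →
    D (combine F G u w) →
    (∀ v ∈ G.V, v ≠ u → v ≠ w → F (combine F G u w) v = F G v) ∧
    F (combine F G u w) w = F G u + F G w

/-- Edge Multiplication (EM), relative to the domain class `D`. -/
def EM (D : WGraph → Prop) (F : WGraph → ℕ → ℝ) : Prop :=
  ∀ G : WGraph, D G → ∀ u ∈ G.V, ∀ x : ℝ, 0 < x → D (G.scaleOut u x) →
    ∀ v ∈ G.V, F (G.scaleOut u x) v = F G v

/-- Edge Compensation (EC), relative to the domain class `D`. -/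
def EC (D : WGraph → Prop) (F : WGraph → ℕ → ℝ) : Prop :=
  ∀ G : WGraph, D G → ∀ u ∈ G.V, ∀ x : ℝ, 0 < x → D (G.compensate u x) →
    (∀ v ∈ G.V, v ≠ u → F (G.compensate u x) v = F G v) ∧
    F (G.compensate u x) u = F G u / x

/-- Baseline (BL), relative to the domain class `D`. -/
def BL (D : WGraph → Prop) (F : WGraph → ℕ → ℝ) : Prop :=
  ∀ G : WGraph, D G → ∀ v ∈ G.V, (∀ e ∈ G.E, e.1 ≠ v ∧ e.2 ≠ v) → F G v = G.b v

/-- A cycle graph: strongly connected, and every node has exactly one outgoing edge. -/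
def IsCycleGraph (G : WGraph) : Prop :=
  G.StronglyConnected ∧ ∀ v ∈ G.V, (G.E.filter (fun e => e.1 = v)).card = 1

/-- Cycle (CY), relative to the domain class `D`. -/
def CY (D : WGraph → Prop) (F : WGraph → ℕ → ℝ) : Prop :=
  ∀ G : WGraph, D G → IsCycleGraph G → (∀ e ∈ G.E, ∀ e' ∈ G.E, G.c e = G.c e') →
    ∀ v ∈ G.V, F G v = (∑ u ∈ G.V, G.b u) / (G.V.card : ℝ)

/-- The three-node graph used to define the profit function: nodes `{0,1,2}` (as `u,v,w`),
an edge `(u,v)` of weight `y`, an edge `(u,w)` of weight `z-y` if `y < z` (no such edge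
if `y = z`), `b(u) = x` and `b(v) = b(w) = 0`. -/
noncomputable def profitGraph (x y z : ℝ) : WGraph where
  V := {0, 1, 2}
  E := if y < z then {(0, 1), (0, 2)} else {(0, 1)}
  b := fun v => if v = 0 then x else 0
  c := fun e => if e = (0, 1) then y else if e = (0, 2) ∧ y < z then z - y else 0

/-- The profit function `p_F(x,y,z)` of a centrality measure `F`. -/
noncomputable def profit (F : WGraph → ℕ → ℝ) (x y z : ℝ) : ℝ := F (profitGraph x y z) 1

/-!
The distributed process with `a = 1` is `p(t) = b Pᵗ`, where `P u w = c(u,w) / deg⁺_u` is a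
row-stochastic matrix on `V` (out-degrees are positive because every node lies on a cycle).
Every coordinate of `x Pᵗ` is at most `‖x‖₁` in absolute value, so all orbits of `x ↦ x P`
are bounded and the finite-dimensional mean ergodic theorem applies: `ker (P - 1)` and
`range (P - 1)` are complementary, and the Cesàro means of `b Pᵗ` converge to the component
`z` of `b` in `ker (P - 1)`. Hence `KP = z`, and `z P = z` is the recursive equation, while
mass preservation `Σ (x P) = Σ x` gives `Σ z = Σ b`.
-/

open Filter Topology Finset Function Matrix

namespace LinearMap

variable {𝕜 E : Type*} [RCLike 𝕜] [NormedAddCommGroup E] [NormedSpace 𝕜 E] {T : E →ₗ[𝕜] E}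

theorem birkhoffAverage_id_add (n : ℕ) (x y : E) :
    birkhoffAverage 𝕜 T _root_.id n (x + y) =
      birkhoffAverage 𝕜 T _root_.id n x + birkhoffAverage 𝕜 T _root_.id n y := by
  simp [birkhoffAverage, birkhoffSum, iterate_map_add, sum_add_distrib, smul_add]

theorem tendsto_birkhoffAverage_sub_one_apply {y : E}
    (hy : Bornology.IsBounded (Set.range fun n => T^[n] y)) :
    Tendsto (birkhoffAverage 𝕜 T _root_.id · ((T - 1) y)) atTop (𝓝 0) := by
  refine (tendsto_birkhoffAverage_apply_sub_birkhoffAverage 𝕜 (g := _root_.id) hy).congr fun n => ?_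
  simp [birkhoffAverage, birkhoffSum, iterate_map_sub, sum_sub_distrib, smul_sub]

theorem disjoint_ker_range_sub_one (hT : ∀ y, Bornology.IsBounded (Set.range fun n => T^[n] y)) :
    Disjoint (ker (T - 1)) (range (T - 1)) := by
  rw [Submodule.disjoint_def]
  rintro _ hx ⟨y, rfl⟩
  have hfix : IsFixedPt T ((T - 1) y) := by simpa [IsFixedPt, sub_eq_zero] using hx
  exact tendsto_nhds_unique (hfix.tendsto_birkhoffAverage 𝕜 _root_.id)
    (tendsto_birkhoffAverage_sub_one_apply (hT y))

theorem exists_tendsto_birkhoffAverage [FiniteDimensional 𝕜 E]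
    (hT : ∀ y, Bornology.IsBounded (Set.range fun n => T^[n] y)) (x : E) :
    ∃ z, T z = z ∧ Tendsto (birkhoffAverage 𝕜 T _root_.id · x) atTop (𝓝 z) := by
  have hcompl : IsCompl (ker (T - 1)) (range (T - 1)) :=
    (Submodule.isCompl_iff_disjoint _ _ (by rw [add_comm, finrank_range_add_finrank_ker])).2
      (disjoint_ker_range_sub_one hT)
  obtain ⟨z, hz, _, ⟨y, rfl⟩, rfl⟩ :=
    Submodule.mem_sup.1 (hcompl.codisjoint.eq_top ▸ Submodule.mem_top (x := x))
  have hfix : IsFixedPt T z := by simpa [IsFixedPt, sub_eq_zero] using hz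
  refine ⟨z, hfix, ?_⟩
  simpa [birkhoffAverage_id_add] using
    (hfix.tendsto_birkhoffAverage 𝕜 _root_.id).add (tendsto_birkhoffAverage_sub_one_apply (hT y))

end LinearMap

theorem tendsto_sum_range_succ_div_of_tendsto_average {a : ℕ → ℝ} {z : ℝ}
    (h : Tendsto (fun N : ℕ => (N : ℝ)⁻¹ * ∑ k ∈ range N, a k) atTop (𝓝 z)) :
    Tendsto (fun N : ℕ => (∑ k ∈ range (N + 1), a k) / N) atTop (𝓝 z) := by
  have hratio : Tendsto (fun N : ℕ => 1 + 1 / (N : ℝ)) atTop (𝓝 1) := by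
    simpa using (tendsto_const_nhds (x := (1 : ℝ))).add tendsto_one_div_atTop_nhds_zero_nat
  have hshift := h.comp (tendsto_add_atTop_nat 1)
  refine (one_mul z ▸ hratio.mul hshift).congr' ?_
  filter_upwards [eventually_ne_atTop 0] with N hN
  simp only [Function.comp_apply, Nat.cast_add, Nat.cast_one]
  field_simp

namespace Matrix

variable {n : Type*} [Fintype n] [DecidableEq n] {M : Matrix n n ℝ}

theorem abs_vecMul_apply_le_of_mem_rowStochastic (hM : M ∈ rowStochastic ℝ n) (x : n → ℝ)
    (j : n) : |(x ᵥ* M) j| ≤ ∑ i, |x i| :=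
  calc |(x ᵥ* M) j| = |∑ i, x i * M i j| := rfl
    _ ≤ ∑ i, |x i * M i j| := abs_sum_le_sum_abs _ _
    _ ≤ ∑ i, |x i| := sum_le_sum fun i _ => by
      rw [abs_mul, abs_of_nonneg (nonneg_of_mem_rowStochastic hM)]
      exact mul_le_of_le_one_right (abs_nonneg _) (le_one_of_mem_rowStochastic hM)

theorem sum_vecMul_of_mem_rowStochastic (hM : M ∈ rowStochastic ℝ n) (x : n → ℝ) :
    ∑ j, (x ᵥ* M) j = ∑ i, x i := by
  simpa [dotProduct] using
    (dotProduct_mulVec x M 1).symm.trans (congrArg (x ⬝ᵥ ·) (one_vecMul_of_mem_rowStochastic hM))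

theorem iterate_vecMulLinear (M : Matrix n n ℝ) (k : ℕ) (x : n → ℝ) :
    (M.vecMulLinear)^[k] x = x ᵥ* M ^ k := by
  induction k generalizing x with
  | zero => simp
  | succ k ih => rw [iterate_succ_apply, ih, vecMulLinear_apply, vecMul_vecMul, pow_succ']

theorem isBounded_range_vecMul_pow (hM : M ∈ rowStochastic ℝ n) (x : n → ℝ) :
    Bornology.IsBounded (Set.range fun k : ℕ => x ᵥ* M ^ k) :=
  isBounded_iff_forall_norm_le.2 ⟨∑ i, |x i|, Set.forall_mem_range.2 fun k =>
    (pi_norm_le_iff_of_nonneg (sum_nonneg fun _ _ => abs_nonneg _)).2 fun j =>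
      (Real.norm_eq_abs _).trans_le
        (abs_vecMul_apply_le_of_mem_rowStochastic (pow_mem hM k) x j)⟩

theorem exists_tendsto_average_vecMul_pow (hM : M ∈ rowStochastic ℝ n) (x : n → ℝ) :
    ∃ z, z ᵥ* M = z ∧ ∑ j, z j = ∑ i, x i ∧
      Tendsto (fun N : ℕ => (N : ℝ)⁻¹ • ∑ k ∈ range N, x ᵥ* M ^ k) atTop (𝓝 z) := by
  obtain ⟨z, hz, hlim⟩ := M.vecMulLinear.exists_tendsto_birkhoffAverage (𝕜 := ℝ)
    (fun y => by simpa only [iterate_vecMulLinear] using isBounded_range_vecMul_pow hM y) x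
  simp only [birkhoffAverage, birkhoffSum, iterate_vecMulLinear, id] at hlim
  refine ⟨z, hz, tendsto_nhds_unique ((continuous_finsetSum _ fun j _ =>
    continuous_apply j).tendsto z |>.comp hlim) (tendsto_const_nhds.congr' ?_), hlim⟩
  filter_upwards [eventually_ne_atTop 0] with N hN
  have hmass : ∑ j, ∑ k ∈ range N, (x ᵥ* M ^ k) j = N * ∑ i, x i := by
    rw [sum_comm]
    simp [sum_vecMul_of_mem_rowStochastic (pow_mem hM _)]
  change _ = ∑ j, ((N : ℝ)⁻¹ • ∑ k ∈ range N, x ᵥ* M ^ k) j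
  simp only [Pi.smul_apply, smul_eq_mul, Finset.sum_apply, ← mul_sum, hmass]
  field_simp

end Matrix

section PathSum

variable {α R : Type*} [DecidableEq α] [CommSemiring R]

noncomputable def pathSum (s : Finset α) (x : α → R) (q : α → α → R) (t : ℕ) (v : α) : R :=
  ∑ ω ∈ Fintype.piFinset (fun _ : Fin (t + 1) => s) with ω (Fin.last t) = v,
    x (ω 0) * ∏ i : Fin t, q (ω i.castSucc) (ω i.succ)

variable {s : Finset α} {x : α → R} {q : α → α → R}

theorem pathSum_zero {v : α} (hv : v ∈ s) : pathSum s x q 0 v = x v := by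
  have : {ω ∈ Fintype.piFinset (fun _ : Fin 1 => s) | ω (Fin.last 0) = v} = {fun _ => v} := by
    ext ω
    simp only [mem_filter, Fintype.mem_piFinset, mem_singleton, funext_iff, Fin.forall_fin_one]
    exact ⟨And.right, fun h => ⟨h ▸ hv, h⟩⟩
  rw [pathSum, this]
  simp

theorem pathSum_succ (t : ℕ) {v : α} (hv : v ∈ s) :
    pathSum s x q (t + 1) v = ∑ u ∈ s, pathSum s x q t u * q u v := by
  have hpi : Fintype.piFinset (fun _ : Fin (t + 1 + 1) => s) =
      (s ×ˢ Fintype.piFinset (fun _ : Fin (t + 1) => s)).map (Fin.snocEquiv _).toEmbedding := by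
    have := filter_piFinset_eq_map_snocEquiv (fun _ : Fin (t + 1 + 1) => s) (fun _ => True)
    simp only [Finset.filter_true] at this
    exact this
  simp only [pathSum, sum_filter, hpi, sum_map, sum_product, sum_mul, ite_mul, zero_mul,
    Equiv.coe_toEmbedding, Fin.snocEquiv_apply, Fin.snoc_last]
  rw [sum_comm, sum_comm (s := s)]
  refine sum_congr rfl fun ω hω => ?_
  rw [sum_ite_eq' s v, if_pos hv, sum_ite_eq s, if_pos (Fintype.mem_piFinset.1 hω _)]
  have h0 : Fin.snoc (α := fun _ => α) ω v 0 = ω 0 := Fin.snoc_castSucc (i := 0) ..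
  simp only [Fin.prod_univ_castSucc, Fin.succ_castSucc, Fin.snoc_castSucc, Fin.succ_last,
    Fin.snoc_last, h0, mul_assoc]

theorem pathSum_eq_vecMul_pow (t : ℕ) (v : s) :
    pathSum s x q t v = ((fun u : s => x u) ᵥ* Matrix.of (fun u w : s => q u w) ^ t) v := by
  induction t generalizing v with
  | zero => rw [pathSum_zero v.2, pow_zero, Matrix.vecMul_one]
  | succ t ih =>
    rw [pathSum_succ t v.2, pow_succ, ← Matrix.vecMul_vecMul, ← sum_coe_sort s]
    simp only [ih]
    rfl

end PathSum

namespace WGraph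

variable {G : WGraph}

theorem Valid.fst_mem (hG : G.Valid) {e : ℕ × ℕ} (he : e ∈ G.E) : e.1 ∈ G.V := (hG.1 e he).1

theorem Valid.snd_mem (hG : G.Valid) {e : ℕ × ℕ} (he : e ∈ G.E) : e.2 ∈ G.V := (hG.1 e he).2

theorem Valid.c_eq_zero (hG : G.Valid) {e : ℕ × ℕ} (he : e ∉ G.E) : G.c e = 0 := hG.2.2.2.2 e he

theorem Valid.c_pos (hG : G.Valid) {e : ℕ × ℕ} (he : e ∈ G.E) : 0 < G.c e := hG.2.2.2.1 e he

theorem Valid.c_nonneg (hG : G.Valid) (e : ℕ × ℕ) : 0 ≤ G.c e := by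
  by_cases he : e ∈ G.E
  · exact (hG.c_pos he).le
  · exact (hG.c_eq_zero he).ge

theorem Valid.sum_filter_fst_eq (hG : G.Valid) (u : ℕ) {f : ℕ × ℕ → ℝ}
    (hf : ∀ e ∉ G.E, f e = 0) : ∑ e ∈ G.E with e.1 = u, f e = ∑ w ∈ G.V, f (u, w) := by
  rw [← sum_singleton (fun u => ∑ w ∈ G.V, f (u, w)) u, ← sum_product]
  refine sum_subset (fun e he => ?_) fun e he hne => hf e fun hE => hne ?_
  · obtain ⟨hE, rfl⟩ := mem_filter.1 he
    exact mem_product.2 ⟨mem_singleton_self _, hG.snd_mem hE⟩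
  · exact mem_filter.2 ⟨hE, mem_singleton.1 (mem_product.1 he).1⟩

theorem Valid.sum_filter_snd_eq (hG : G.Valid) (v : ℕ) {f : ℕ × ℕ → ℝ}
    (hf : ∀ e ∉ G.E, f e = 0) : ∑ e ∈ G.E with e.2 = v, f e = ∑ u ∈ G.V, f (u, v) := by
  rw [← sum_singleton (fun v => ∑ u ∈ G.V, f (u, v)) v, ← sum_product_right]
  refine sum_subset (fun e he => ?_) fun e he hne => hf e fun hE => hne ?_
  · obtain ⟨hE, rfl⟩ := mem_filter.1 he
    exact mem_product.2 ⟨hG.fst_mem hE, mem_singleton_self _⟩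
  · exact mem_filter.2 ⟨hE, mem_singleton.1 (mem_product.1 he).2⟩

theorem degOut_pos (hG : G.InGKP) {u : ℕ} (hu : u ∈ G.V) : 0 < G.degOut u := by
  obtain ⟨t, ω, ⟨ht, hwalk⟩, h0, -⟩ := hG.2.1 u hu
  have he : (u, ω 1) ∈ G.E := h0 ▸ hwalk 0 ht
  exact sum_pos (fun e he' => hG.1.c_pos (mem_filter.1 he').1) ⟨_, mem_filter.2 ⟨he, rfl⟩⟩

noncomputable def transitionMatrix (G : WGraph) : Matrix G.V G.V ℝ :=
  Matrix.of fun u w => G.c (u, w) / G.degOut u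

theorem transitionMatrix_mem_rowStochastic (hG : G.InGKP) :
    G.transitionMatrix ∈ Matrix.rowStochastic ℝ G.V := by
  refine Matrix.mem_rowStochastic_iff_sum.2 ⟨fun u w => ?_, fun u => ?_⟩
  · exact div_nonneg (hG.1.c_nonneg _) (degOut_pos hG u.2).le
  · simp only [transitionMatrix, Matrix.of_apply]
    rw [← sum_div, sum_coe_sort G.V fun w => G.c (u, w), ← hG.1.sum_filter_fst_eq u
      fun _ he => hG.1.c_eq_zero he]
    exact div_self (degOut_pos hG u.2).ne'

theorem vecMul_transitionMatrix_apply (hG : G.Valid) (f : ℕ → ℝ) (v : G.V) :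
    ((fun u : G.V => f u) ᵥ* G.transitionMatrix) v =
      ∑ e ∈ G.E with e.2 = (v : ℕ), G.c e / G.degOut e.1 * f e.1 := by
  rw [hG.sum_filter_snd_eq v fun e he => by rw [hG.c_eq_zero he, zero_div, zero_mul],
    ← sum_coe_sort G.V]
  simp only [Matrix.vecMul, dotProduct, transitionMatrix, Matrix.of_apply, mul_comm]

theorem pProc_one_eq_pathSum (hG : G.Valid) (t v : ℕ) :
    pProc 1 G t v = pathSum G.V G.b (fun u w => G.c (u, w) / G.degOut u) t v := by
  rw [pProc, pathSum, ← filter_filter, sum_filter]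
  refine sum_congr rfl fun ω _ => ?_
  split_ifs with hwalk
  · simp only [one_mul]
  · push Not at hwalk
    obtain ⟨i, hi⟩ := hwalk
    rw [prod_eq_zero (mem_univ i) (by rw [hG.c_eq_zero hi, zero_div]), mul_zero]

theorem pProc_one_eq_vecMul_pow (hG : G.Valid) (t : ℕ) (v : G.V) :
    pProc 1 G t v = ((fun u : G.V => G.b u) ᵥ* G.transitionMatrix ^ t) v := by
  rw [pProc_one_eq_pathSum hG, pathSum_eq_vecMul_pow]
  rfl

theorem exists_stationary_eq_KP (hG : G.InGKP) :
    ∃ z : G.V → ℝ, z ᵥ* G.transitionMatrix = z ∧ ∑ v, z v = ∑ v ∈ G.V, G.b v ∧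
      ∀ v : G.V, G.KP v = z v := by
  obtain ⟨z, hzP, hzsum, hz⟩ :=
    Matrix.exists_tendsto_average_vecMul_pow (transitionMatrix_mem_rowStochastic hG)
      fun v : G.V => G.b v
  refine ⟨z, hzP, hzsum.trans (sum_coe_sort G.V G.b), fun v => ?_⟩
  refine (tendsto_sum_range_succ_div_of_tendsto_average ?_).limUnder_eq
  refine (((continuous_apply v).tendsto z).comp hz).congr fun N => ?_
  simp [pProc_one_eq_vecMul_pow hG.1]

end WGraph

/-- For every `G ∈ 𝒢^KP`, Katz prestige (defined as a Cesàro limit) satisfies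
the recursive equation `KP_v(G) = Σ_{(u,v)∈E} (c(u,v)/deg⁺_u(G))·KP_u(G)` for every node
`v ∈ V`, and moreover `Σ_{v∈V} KP_v(G) = Σ_{v∈V} b(v)`. -/
theorem kp_recursive_equation (G : WGraph) (hG : G.InGKP) :
    (∀ v ∈ G.V, WGraph.KP G v =
      ∑ e ∈ G.E.filter (fun e => e.2 = v), (G.c e / G.degOut e.1) * WGraph.KP G e.1) ∧
    (∑ v ∈ G.V, WGraph.KP G v) = ∑ v ∈ G.V, G.b v := by
  obtain ⟨z, hzP, hzsum, hKP⟩ := WGraph.exists_stationary_eq_KP hG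
  have hz : z = fun v : G.V => G.KP v := funext fun v => (hKP v).symm
  refine ⟨fun v hv => ?_, ?_⟩
  · rw [hKP ⟨v, hv⟩, ← hzP, hz, WGraph.vecMul_transitionMatrix_apply hG.1]
  · rw [← sum_coe_sort G.V, ← hzsum, hz]
end

section
/- For every graph G=(V,E,b,c)∈𝒢^EV that is out-regular, Eigenvector centrality and Katz prestige coincide: EV_v(G)=KP_v(G) for every node v∈V. -/
open Filter

attribute [local instance] Classical.propDecidable

/-! On an `x`-out-regular graph every column of the adjacency matrix sums to `x`. Hence the
all-ones vector is a left eigenvector for `x`, while comparing `ℓ¹` norms shows that no real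
eigenvalue exceeds `x`; so `λ = x`. Then each factor `c/deg⁺` of the distributed process equals
`c/λ`, the processes `w^{1/λ}` and `p^1` agree term by term, and so do their Cesàro limits. -/

namespace Matrix

variable {n : Type*} [Fintype n] {A : Matrix n n ℝ} {x : ℝ}

theorem exists_mulVec_eq_smul_of_sum_col_eq [DecidableEq n] [Nonempty n]
    (hcol : ∀ j, ∑ i, A i j = x) : ∃ y ≠ 0, A *ᵥ y = x • y := by
  have hleft : (fun _ => (1 : ℝ)) ᵥ* (A - x • 1) = 0 := by
    rw [vecMul_sub, vecMul_smul, vecMul_one, sub_eq_zero]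
    funext j
    simp [vecMul, dotProduct, hcol]
  obtain ⟨y, hy0, hy⟩ := exists_mulVec_eq_zero_iff.mpr <| exists_vecMul_eq_zero_iff.mp
    ⟨_, fun h => one_ne_zero (congrFun h (Classical.arbitrary n)), hleft⟩
  exact ⟨y, hy0, by rwa [sub_mulVec, smul_mulVec, one_mulVec, sub_eq_zero] at hy⟩

theorem abs_le_of_mulVec_eq_smul_of_sum_col_eq (hA : ∀ i j, 0 ≤ A i j)
    (hcol : ∀ j, ∑ i, A i j = x) {r : ℝ} {z : n → ℝ} (hz0 : z ≠ 0) (hz : A *ᵥ z = r • z) :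
    |r| ≤ x := by
  have hpos : 0 < ∑ i, |z i| := by
    obtain ⟨i, hi⟩ := Function.ne_iff.mp hz0
    exact Finset.sum_pos' (fun j _ => abs_nonneg (z j)) ⟨i, Finset.mem_univ i, abs_pos.mpr hi⟩
  refine le_of_mul_le_mul_right ?_ hpos
  calc |r| * ∑ i, |z i| = ∑ i, |(A *ᵥ z) i| := by
        simp [hz, Finset.mul_sum, abs_mul]
    _ ≤ ∑ i, ∑ j, A i j * |z j| := by
        refine Finset.sum_le_sum fun i _ => (Finset.abs_sum_le_sum_abs _ _).trans_eq ?_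
        simp only [abs_mul, abs_of_nonneg (hA i _)]
    _ = x * ∑ j, |z j| := by
        rw [Finset.sum_comm, Finset.mul_sum]
        simp only [← Finset.sum_mul, hcol]

end Matrix

namespace WGraph

variable {G : WGraph}

theorem adjMatrix_nonneg (hG : G.Valid) (u v : {v // v ∈ G.V}) : 0 ≤ G.adjMatrix u v := by
  unfold adjMatrix
  split_ifs with he
  exacts [(hG.2.2.2.1 _ he).le, le_rfl]

theorem sum_adjMatrix_col (hG : G.Valid) (v : {v // v ∈ G.V}) :
    ∑ u, G.adjMatrix u v = G.degOut v := by
  unfold adjMatrix degOut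
  rw [Finset.sum_coe_sort G.V (fun u => if ((v : ℕ), u) ∈ G.E then G.c (v, u) else 0),
    ← Finset.sum_filter]
  refine Finset.sum_nbij' (fun u => ((v : ℕ), u)) Prod.snd (by simp_all) ?_ (by simp)
    (by simp_all) (by simp)
  rintro ⟨v', u⟩ he
  simp only [Finset.mem_filter] at he ⊢
  exact ⟨(hG.1 _ he.1).2, he.2 ▸ he.1⟩

theorem principalEig_eq_of_degOut_eq (hG : G.Valid) {x : ℝ}
    (hdeg : ∀ v ∈ G.V, G.degOut v = x) (hV : G.V.Nonempty) : G.principalEig = x := by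
  have : Nonempty {v // v ∈ G.V} := hV.coe_sort
  have hcol (v : {v // v ∈ G.V}) : ∑ u, G.adjMatrix u v = x :=
    (sum_adjMatrix_col hG v).trans (hdeg v v.2)
  refine IsGreatest.csSup_eq ⟨Matrix.exists_mulVec_eq_smul_of_sum_col_eq hcol, ?_⟩
  rintro r ⟨z, hz0, hz⟩
  exact (le_abs_self r).trans
    (Matrix.abs_le_of_mulVec_eq_smul_of_sum_col_eq (adjMatrix_nonneg hG) hcol hz0 hz)

theorem wProc_div_eq_pProc {x : ℝ} (hdeg : ∀ v ∈ G.V, G.degOut v = x) (a : ℝ) (t v : ℕ) :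
    G.wProc (a / x) t v = G.pProc a t v := by
  refine Finset.sum_congr rfl fun ω hω => ?_
  simp only [Finset.mem_filter, Fintype.mem_piFinset] at hω
  refine congrArg _ (Finset.prod_congr rfl fun i _ => ?_)
  rw [hdeg _ (hω.1 i.castSucc), div_mul_eq_mul_div]

end WGraph

/-- For every out-regular graph `G ∈ 𝒢^EV`, Eigenvector centrality and
Katz prestige coincide. -/
theorem ev_eq_kp_on_out_regular (G : WGraph) (hG : G.InGEV) (hreg : G.OutRegular) :
    ∀ v ∈ G.V, WGraph.EV G v = WGraph.KP G v := by
  intro v hv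
  obtain ⟨x, -, hdeg⟩ := hreg
  have heig : G.principalEig = x :=
    WGraph.principalEig_eq_of_degOut_eq hG.1.1 hdeg ⟨v, hv⟩
  simp only [WGraph.EV, WGraph.KP, heig, WGraph.wProc_div_eq_pProc hdeg]
end
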